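/- arXiv:1510.07248 — 8 statements merged into one kernel-verified Lean document; each statement's English description precedes it below -/
import Mathlib

section
/- The rotating Kepler Hamiltonian H_R has exactly one critical value, namely -3/2. More precisely, a point (q,p) in (ℝ²∖{(0,0)})×ℝ² is a critical point of H_R if and only if |q| = 1 and p = (q₂, -q₁), and at every such critical point H_R(q,p) = -3/2; hence the set of critical values of H_R equals {-3/2}. -/
/-!
The gradient of `H_R` at `(q, p)` is `(q / |q|³ + (p₂, -p₁), p + (-q₂, q₁))`. Its momentum part
vanishes iff `p = (q₂, -q₁)`; the position part is then `(|q|⁻³ - 1) q`, which for `q ≠ 0`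
vanishes iff `|q| = 1`. Along `p = (q₂, -q₁)` one has `H_R = -|q|²/2 - 1/|q|`, which is `-3/2`
on the unit circle.
-/

/-- The rotating Kepler Hamiltonian `H_R(q,p) = ½|p|² − 1/|q| + q₁p₂ − q₂p₁`
on `(ℝ²∖{0}) × ℝ²`, written with coordinates. -/
noncomputable def HR (x : (ℝ × ℝ) × (ℝ × ℝ)) : ℝ :=
  (1/2) * (x.2.1^2 + x.2.2^2) - 1 / Real.sqrt (x.1.1^2 + x.1.2^2)
    + x.1.1 * x.2.2 - x.1.2 * x.2.1

open ContinuousLinearMap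

noncomputable def radius (q : ℝ × ℝ) : ℝ := √(q.1 ^ 2 + q.2 ^ 2)

lemma sum_sq_pos_of_ne_zero {q : ℝ × ℝ} (hq : q ≠ 0) : 0 < q.1 ^ 2 + q.2 ^ 2 := by
  have : q.1 ≠ 0 ∨ q.2 ≠ 0 := by
    by_contra! h
    exact hq (Prod.ext h.1 h.2)
  rcases this with h | h <;> positivity

lemma radius_pos {q : ℝ × ℝ} (hq : q ≠ 0) : 0 < radius q :=
  Real.sqrt_pos.2 (sum_sq_pos_of_ne_zero hq)

lemma radius_sq (q : ℝ × ℝ) : radius q ^ 2 = q.1 ^ 2 + q.2 ^ 2 :=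
  Real.sq_sqrt (by positivity)

noncomputable def pairing (g : (ℝ × ℝ) × (ℝ × ℝ)) : ((ℝ × ℝ) × (ℝ × ℝ)) →L[ℝ] ℝ :=
  (g.1.1 • fst ℝ ℝ ℝ + g.1.2 • snd ℝ ℝ ℝ).coprod (g.2.1 • fst ℝ ℝ ℝ + g.2.2 • snd ℝ ℝ ℝ)

@[simp] lemma pairing_apply (g v : (ℝ × ℝ) × (ℝ × ℝ)) :
    pairing g v = g.1.1 * v.1.1 + g.1.2 * v.1.2 + (g.2.1 * v.2.1 + g.2.2 * v.2.2) :=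
  rfl

lemma pairing_eq_zero_iff {g : (ℝ × ℝ) × (ℝ × ℝ)} : pairing g = 0 ↔ g = 0 := by
  refine ⟨fun h => ?_, fun h => ext fun v => by simp [h]⟩
  have e1 := congrArg (· ((1, 0), (0, 0))) h
  have e2 := congrArg (· ((0, 1), (0, 0))) h
  have e3 := congrArg (· ((0, 0), (1, 0))) h
  have e4 := congrArg (· ((0, 0), (0, 1))) h
  simp only [pairing_apply, zero_apply] at e1 e2 e3 e4
  ext <;> simp_all

noncomputable def gradHR (q p : ℝ × ℝ) : (ℝ × ℝ) × (ℝ × ℝ) :=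
  ((q.1 / radius q ^ 3 + p.2, q.2 / radius q ^ 3 - p.1), (p.1 - q.2, p.2 + q.1))

lemma hasFDerivAt_HR {q : ℝ × ℝ} (hq : q ≠ 0) (p : ℝ × ℝ) :
    HasFDerivAt HR (pairing (gradHR q p)) (q, p) := by
  have hs := sum_sq_pos_of_ne_zero hq
  have hr := radius_pos hq
  have hx := hasFDerivAt_id (𝕜 := ℝ) (q, p)
  have hq₁ := hx.fst.fst
  have hq₂ := hx.fst.snd
  have hp₁ := hx.snd.fst
  have hp₂ := hx.snd.snd
  have hpot := ((hasDerivAt_const (q.1 ^ 2 + q.2 ^ 2) (1 : ℝ)).div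
    (Real.hasDerivAt_sqrt hs.ne') hr.ne').comp_hasFDerivAt (q, p) ((hq₁.pow 2).add (hq₂.pow 2))
  refine (((((hp₁.pow 2).add (hp₂.pow 2)).const_mul (1 / 2)).sub hpot |>.add (hq₁.mul hp₂)).sub
    (hq₂.mul hp₁)).congr_fderiv ?_
  refine ContinuousLinearMap.ext fun v => ?_
  have hr' : √(q.1 ^ 2 + q.2 ^ 2) ≠ 0 := hr.ne'
  simp only [gradHR, radius, pairing_apply, sub_apply, add_apply, smul_apply, comp_apply,
    coe_fst', coe_snd', id_eq, comp_id, smul_eq_mul, nsmul_eq_mul, Nat.cast_ofNat]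
  field_simp
  ring

lemma hasFDerivAt_HR_zero_iff_gradHR {q : ℝ × ℝ} (hq : q ≠ 0) (p : ℝ × ℝ) :
    HasFDerivAt HR (0 : ((ℝ × ℝ) × (ℝ × ℝ)) →L[ℝ] ℝ) (q, p) ↔ gradHR q p = 0 :=
  ⟨fun h => pairing_eq_zero_iff.1 ((hasFDerivAt_HR hq p).unique h),
    fun h => pairing_eq_zero_iff.2 h ▸ hasFDerivAt_HR hq p⟩

lemma gradHR_eq_zero_iff {q : ℝ × ℝ} (hq : q ≠ 0) (p : ℝ × ℝ) :
    gradHR q p = 0 ↔ radius q = 1 ∧ p = (q.2, -q.1) := by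
  have hr := radius_pos hq
  simp only [gradHR, Prod.ext_iff, Prod.fst_zero, Prod.snd_zero]
  constructor
  · rintro ⟨⟨h₁, h₂⟩, h₃, h₄⟩
    have hp₁ : p.1 = q.2 := by linarith
    have hp₂ : p.2 = -q.1 := by linarith
    have hr₃ : radius q ^ 2 = radius q ^ 2 / radius q ^ 3 := calc
      radius q ^ 2 = q.1 * q.1 + q.2 * q.2 := by rw [radius_sq]; ring
      _ = q.1 * (q.1 / radius q ^ 3) + q.2 * (q.2 / radius q ^ 3) := by
        rw [eq_neg_of_add_eq_zero_left h₁, sub_eq_zero.1 h₂, hp₁, hp₂]; ring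
      _ = radius q ^ 2 / radius q ^ 3 := by rw [radius_sq]; ring
    field_simp at hr₃
    exact ⟨(pow_eq_one_iff_of_nonneg hr.le three_ne_zero).1 hr₃, hp₁, hp₂⟩
  · rintro ⟨h, hp₁, hp₂⟩
    simp [h, hp₁, hp₂]

lemma HR_rotated_momentum (q : ℝ × ℝ) :
    HR (q, (q.2, -q.1)) = -(radius q ^ 2 / 2) - 1 / radius q := by
  rw [radius_sq]
  simp only [HR, radius]
  ring

lemma hasFDerivAt_HR_zero_iff {q : ℝ × ℝ} (hq : q ≠ 0) (p : ℝ × ℝ) :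
    HasFDerivAt HR (0 : ((ℝ × ℝ) × (ℝ × ℝ)) →L[ℝ] ℝ) (q, p) ↔ radius q = 1 ∧ p = (q.2, -q.1) :=
  (hasFDerivAt_HR_zero_iff_gradHR hq p).trans (gradHR_eq_zero_iff hq p)

lemma HR_eq_of_hasFDerivAt_zero {q p : ℝ × ℝ} (hq : q ≠ 0)
    (h : HasFDerivAt HR (0 : ((ℝ × ℝ) × (ℝ × ℝ)) →L[ℝ] ℝ) (q, p)) : HR (q, p) = -(3 / 2) := by
  obtain ⟨hr, rfl⟩ := (hasFDerivAt_HR_zero_iff hq p).1 h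
  rw [HR_rotated_momentum, hr]
  norm_num

/-- The rotating Kepler Hamiltonian has exactly one critical value, `-3/2`:
`(q,p)` with `q ≠ 0` is a critical point of `H_R` iff `|q| = 1` and
`p = (q₂, -q₁)`; every critical point has value `-3/2`; and the set of
critical values of `H_R` equals `{-3/2}`. -/
theorem rotating_kepler_critical_value :
    (∀ q p : ℝ × ℝ, q ≠ 0 →
      (HasFDerivAt HR (0 : ((ℝ × ℝ) × (ℝ × ℝ)) →L[ℝ] ℝ) (q, p) ↔
        Real.sqrt (q.1^2 + q.2^2) = 1 ∧ p = (q.2, -q.1))) ∧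
    (∀ q p : ℝ × ℝ, q ≠ 0 →
      HasFDerivAt HR (0 : ((ℝ × ℝ) × (ℝ × ℝ)) →L[ℝ] ℝ) (q, p) →
      HR (q, p) = -(3/2)) ∧
    {c : ℝ | ∃ q p : ℝ × ℝ, q ≠ 0 ∧
        HasFDerivAt HR (0 : ((ℝ × ℝ) × (ℝ × ℝ)) →L[ℝ] ℝ) (q, p) ∧
        HR (q, p) = c} = {-(3/2)} := by
  refine ⟨fun q p hq => hasFDerivAt_HR_zero_iff hq p, fun q p hq => HR_eq_of_hasFDerivAt_zero hq,
    Set.ext fun c => ⟨?_, ?_⟩⟩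
  · rintro ⟨q, p, hq, h, rfl⟩
    exact HR_eq_of_hasFDerivAt_zero hq h
  · rintro rfl
    have hq : ((1, 0) : ℝ × ℝ) ≠ 0 := by simp
    have h := (hasFDerivAt_HR_zero_iff hq (0, -1)).2 ⟨by simp [radius], by simp⟩
    exact ⟨(1, 0), (0, -1), hq, h, HR_eq_of_hasFDerivAt_zero hq h⟩
end

section
/- For every r with 0 < r < 1, the direct circular orbit γ_D^r(t) = (q(t),p(t)) with q(t) = (r cos((1−r^{-3/2})t), r sin((1−r^{-3/2})t)) and p(t) = (r^{-1/2} sin((1−r^{-3/2})t), −r^{-1/2} cos((1−r^{-3/2})t)) solves Hamilton's equations of the rotating Kepler problem (q̇₁ = p₁ − q₂, q̇₂ = p₂ + q₁, ṗ₁ = −q₁/|q|³ − p₂, ṗ₂ = −q₂/|q|³ + p₁); it lies on the energy level H_R(γ_D^r(t)) = −1/(2r) − √r for all t, and its action over one period equals ∫₀^{2π/(r^{-3/2}−1)} ⟨−q(t), ṗ(t)⟩ dt = 2π√r. -/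
/-!
Along a circle `q = ρ (cos ωt, sin ωt)`, `p = c (sin ωt, -cos ωt)` Hamilton's equations reduce
to the two balance conditions `ρ (1 - ω) = c` and `c (1 - ω) = ρ⁻²`, which for the direct orbit
hold with `ρ = r`, `c = r^{-1/2}`, `1 - ω = r^{-3/2}`. Every term of `H_R` and of the action
integrand `-⟨q, ṗ⟩ = -ρ c ω` is then constant in time, so the energy is `c²/2 - 1/ρ - ρ c` and
the action over the period `2π / (-ω)` is `2π ρ c = 2π √r`.
-/

open Real

lemma hasDerivAt_const_mul_cos_mul (a ω t : ℝ) :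
    HasDerivAt (fun t => a * cos (ω * t)) (-(a * ω) * sin (ω * t)) t :=
  (((hasDerivAt_id' t).const_mul ω).cos.const_mul a).congr_deriv (by ring)

lemma hasDerivAt_const_mul_sin_mul (a ω t : ℝ) :
    HasDerivAt (fun t => a * sin (ω * t)) (a * ω * cos (ω * t)) t :=
  (((hasDerivAt_id' t).const_mul ω).sin.const_mul a).congr_deriv (by ring)

lemma sqrt_mul_cos_sq_add_mul_sin_sq {ρ : ℝ} (hρ : 0 ≤ ρ) (θ : ℝ) :
    √((ρ * cos θ) ^ 2 + (ρ * sin θ) ^ 2) = ρ := by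
  have hsq : (ρ * cos θ) ^ 2 + (ρ * sin θ) ^ 2 = ρ ^ 2 := by
    linear_combination ρ ^ 2 * cos_sq_add_sin_sq θ
  rw [hsq, sqrt_sq hρ]

section CircularOrbit

variable {ρ c ω : ℝ}

theorem circularOrbit_solves_rotatingKepler (hρ : 0 < ρ) (hq : ρ * (1 - ω) = c)
    (hp : c * (1 - ω) = 1 / ρ ^ 2) (t : ℝ) :
    let q1 : ℝ → ℝ := fun t => ρ * cos (ω * t)
    let q2 : ℝ → ℝ := fun t => ρ * sin (ω * t)
    let p1 : ℝ → ℝ := fun t => c * sin (ω * t)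
    let p2 : ℝ → ℝ := fun t => -c * cos (ω * t)
    HasDerivAt q1 (p1 t - q2 t) t ∧
    HasDerivAt q2 (p2 t + q1 t) t ∧
    HasDerivAt p1 (-(q1 t) / (√((q1 t) ^ 2 + (q2 t) ^ 2)) ^ 3 - p2 t) t ∧
    HasDerivAt p2 (-(q2 t) / (√((q1 t) ^ 2 + (q2 t) ^ 2)) ^ 3 + p1 t) t := by
  intro q1 q2 p1 p2
  have hρ3 : ρ / ρ ^ 3 = 1 / ρ ^ 2 := by field_simp
  simp only [q1, q2, p1, p2, sqrt_mul_cos_sq_add_mul_sin_sq hρ.le, neg_div, mul_div_right_comm,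
    hρ3]
  refine ⟨?_, ?_, ?_, ?_⟩
  · convert hasDerivAt_const_mul_cos_mul ρ ω t using 1
    linear_combination -sin (ω * t) * hq
  · convert hasDerivAt_const_mul_sin_mul ρ ω t using 1
    linear_combination cos (ω * t) * hq
  · convert hasDerivAt_const_mul_sin_mul c ω t using 1
    linear_combination cos (ω * t) * hp
  · convert hasDerivAt_const_mul_cos_mul (-c) ω t using 1
    linear_combination sin (ω * t) * hp

theorem HR_circularOrbit (hρ : 0 ≤ ρ) (c θ : ℝ) :
    HR ((ρ * cos θ, ρ * sin θ), (c * sin θ, -c * cos θ)) = c ^ 2 / 2 - 1 / ρ - ρ * c := by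
  simp only [HR, sqrt_mul_cos_sq_add_mul_sin_sq hρ]
  linear_combination (c ^ 2 / 2 - ρ * c) * sin_sq_add_cos_sq θ

variable (ρ c ω) in
theorem circularOrbit_action_integrand (t : ℝ) :
    -(ρ * cos (ω * t)) * deriv (fun t => c * sin (ω * t)) t
      + -(ρ * sin (ω * t)) * deriv (fun t => -c * cos (ω * t)) t = -(ρ * c * ω) := by
  rw [(hasDerivAt_const_mul_sin_mul c ω t).deriv, (hasDerivAt_const_mul_cos_mul (-c) ω t).deriv]
  linear_combination -(ρ * c * ω) * sin_sq_add_cos_sq (ω * t)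

theorem integral_circularOrbit_action (hω : ω ≠ 0) :
    ∫ t in (0 : ℝ)..2 * π / -ω, (-(ρ * cos (ω * t)) * deriv (fun t => c * sin (ω * t)) t
      + -(ρ * sin (ω * t)) * deriv (fun t => -c * cos (ω * t)) t) = 2 * π * (ρ * c) := by
  simp only [circularOrbit_action_integrand, intervalIntegral.integral_const, smul_eq_mul]
  field_simp
  ring

end CircularOrbit

/-- For every `0 < r < 1`, the direct circular orbit of radius `r` solves
Hamilton's equations of the rotating Kepler problem, lies on the energy level
`−1/(2r) − √r`, and has action `∫₀^{2π/(r^{-3/2}−1)} ⟨−q, ṗ⟩ dt = 2π√r`. -/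
theorem direct_orbit_action (r : ℝ) (hr0 : 0 < r) (hr1 : r < 1) :
    let ω : ℝ := 1 - r ^ (-(3:ℝ)/2)
    let q1 : ℝ → ℝ := fun t => r * Real.cos (ω * t)
    let q2 : ℝ → ℝ := fun t => r * Real.sin (ω * t)
    let p1 : ℝ → ℝ := fun t => r ^ (-(1:ℝ)/2) * Real.sin (ω * t)
    let p2 : ℝ → ℝ := fun t => -(r ^ (-(1:ℝ)/2)) * Real.cos (ω * t)
    (∀ t : ℝ,
      HasDerivAt q1 (p1 t - q2 t) t ∧
      HasDerivAt q2 (p2 t + q1 t) t ∧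
      HasDerivAt p1 (-(q1 t) / (Real.sqrt ((q1 t)^2 + (q2 t)^2))^3 - p2 t) t ∧
      HasDerivAt p2 (-(q2 t) / (Real.sqrt ((q1 t)^2 + (q2 t)^2))^3 + p1 t) t) ∧
    (∀ t : ℝ, HR ((q1 t, q2 t), (p1 t, p2 t)) = -(1/(2*r)) - Real.sqrt r) ∧
    (∫ t in (0:ℝ)..(2 * Real.pi / (r ^ (-(3:ℝ)/2) - 1)),
        (-(q1 t) * deriv p1 t + -(q2 t) * deriv p2 t))
      = 2 * Real.pi * Real.sqrt r := by
  intro ω q1 q2 p1 p2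
  have hq : r * (1 - ω) = r ^ (-(1:ℝ)/2) := by
    rw [sub_sub_cancel, ← rpow_one_add' hr0.le (by norm_num)]; norm_num
  have hp : r ^ (-(1:ℝ)/2) * (1 - ω) = 1 / r ^ 2 := by
    rw [sub_sub_cancel, ← rpow_add hr0]; norm_num
  have hc2 : (r ^ (-(1:ℝ)/2)) ^ 2 = 1 / r := by
    rw [← rpow_natCast, ← rpow_mul hr0.le]; norm_num [rpow_neg_one]
  have hrc : r * r ^ (-(1:ℝ)/2) = √r := by
    rw [← rpow_one_add' hr0.le (by norm_num), sqrt_eq_rpow]; norm_num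
  have hω : ω ≠ 0 := by
    have : 1 < r ^ (-(3:ℝ)/2) := one_lt_rpow_of_pos_of_lt_one_of_neg hr0 hr1 (by norm_num)
    simp only [ω]; linarith
  have hperiod : 2 * π / (r ^ (-(3:ℝ)/2) - 1) = 2 * π / -ω := by simp only [ω, neg_sub]
  refine ⟨circularOrbit_solves_rotatingKepler hr0 hq hp, fun t => ?_, ?_⟩
  · exact (HR_circularOrbit hr0.le _ _).trans (by rw [hc2, hrc]; ring)
  · rw [hperiod]
    exact (integral_circularOrbit_action hω).trans (by rw [hrc])
end

section
/- For every real c > 3/2, the number x = (1/2)·√(3/(2c)) / cos((1/3)·arccos((3/(2c))^{3/2})) satisfies x > 0 and 1/(2x²) − x = c; i.e. the unique positive solution of 1/(2x²) − x = c is L_R(c) = (1/2)√(3/(2c)) sec((1/3) arccos((3/(2c))^{3/2})). -/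
/-!
With `a = 3/(2c) ∈ (0,1)`, `s = √a` and `u = cos(θ/3)` where `cos θ = s³`, the triple-angle
formula gives `4u³ − 3u = s³`, i.e. `u` is a root of Viète's trigonometric form of the cubic.
For `x = s/(2u)` this turns `1/(2x²) − x = (4u³ − s³)/(2s²u)` into `3/(2s²) = 3/(2a) = c`.
-/

open Real

theorem cos_three_mul_third_arccos {y : ℝ} (hy₁ : -1 ≤ y) (hy₂ : y ≤ 1) :
    4 * cos ((1/3) * arccos y) ^ 3 - 3 * cos ((1/3) * arccos y) = y := by
  rw [← cos_three_mul, ← mul_assoc, mul_one_div_cancel three_ne_zero, one_mul,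
    cos_arccos hy₁ hy₂]

theorem cos_third_arccos_pos (y : ℝ) : 0 < cos ((1/3) * arccos y) := by
  have h₀ := arccos_nonneg y
  have hπ := arccos_le_pi y
  apply cos_pos_of_mem_Ioo
  constructor <;> linarith [pi_pos]

theorem one_div_two_mul_sq_sub_of_cubic {s u : ℝ} (hs : s ≠ 0) (hu : u ≠ 0)
    (hcubic : 4 * u ^ 3 - 3 * u = s ^ 3) :
    1 / (2 * (s / (2 * u)) ^ 2) - s / (2 * u) = 3 / (2 * s ^ 2) := by
  field_simp
  linear_combination hcubic

/-- For every `c > 3/2`, the number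
`x = (1/2)√(3/(2c)) · sec((1/3) arccos((3/(2c))^{3/2}))`
is positive and solves `1/(2x²) − x = c`; i.e. it is the positive root
`L_R(c)` of the rotating Kepler problem. -/
theorem LR_explicit_formula (c : ℝ) (hc : 3/2 < c) :
    let x : ℝ := (1/2) * Real.sqrt (3/(2*c)) /
      Real.cos ((1/3) * Real.arccos ((3/(2*c)) ^ ((3:ℝ)/2)))
    0 < x ∧ 1/(2*x^2) - x = c := by
  intro x
  set a : ℝ := 3/(2*c)
  have ha₀ : 0 < a := by positivity
  have ha₁ : a < 1 := by rw [div_lt_one (by linarith)]; linarith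
  have hpow : a ^ ((3:ℝ)/2) = √a ^ 3 := by
    rw [rpow_div_two_eq_sqrt 3 ha₀.le, ← rpow_natCast]; norm_num
  set u := cos ((1/3) * arccos (a ^ ((3:ℝ)/2)))
  have hu : 0 < u := cos_third_arccos_pos _
  have hs : 0 < √a := sqrt_pos.mpr ha₀
  have hcubic : 4 * u ^ 3 - 3 * u = √a ^ 3 := by
    rw [← hpow]
    exact cos_three_mul_third_arccos (by linarith [rpow_nonneg ha₀.le ((3:ℝ)/2)])
      (rpow_le_one ha₀.le ha₁.le (by norm_num))
  have hx : x = √a / (2 * u) := by ring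
  refine ⟨by rw [hx]; positivity, ?_⟩
  rw [hx, one_div_two_mul_sq_sub_of_cubic hs.ne' hu.ne' hcubic, sq_sqrt ha₀.le]
  simp only [a]
  field_simp
end

section
/- For every real c > 3/2, the number x = (1/2)·√(3/(2c)) / cos((1/3)·arccos((3/(2c))^{3/2}) + 2π/3) satisfies −1 < x < 0 and 1/(2x²) − x = c; i.e. the unique solution of 1/(2x²) − x = c in (−1,0) is L_D(c) = (1/2)√(3/(2c)) sec((1/3) arccos((3/(2c))^{3/2}) + 2π/3). -/
/-!
The equation `1/(2x²) − x = c` becomes, after substituting `x = r/(2C)` with `r² = 3/(2c)`, the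
triple-angle identity `4C³ − 3C = r³`. Its three roots are `C = cos((arccos r³ + 2πk)/3)`, and the
branch `k = 1` has angle in `[2π/3, π]`, so `C ≤ −1/2`, which puts `x` in `[−r, 0) ⊆ (−1, 0)`.
-/

open Real

lemma rpow_three_halves_eq_sqrt_pow_three {t : ℝ} (ht : 0 ≤ t) : t ^ ((3:ℝ)/2) = √t ^ 3 := by
  rw [sqrt_eq_rpow, ← rpow_mul_natCast ht]
  norm_num

lemma four_mul_cos_third_arccos_add_two_pi_div_three_pow_three {y : ℝ} (hy₁ : -1 ≤ y)
    (hy₂ : y ≤ 1) :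
    4 * cos ((1/3) * arccos y + 2*π/3) ^ 3 - 3 * cos ((1/3) * arccos y + 2*π/3) = y := by
  rw [← cos_three_mul, show 3 * ((1/3) * arccos y + 2*π/3) = arccos y + 2*π by ring,
    cos_add_two_pi, cos_arccos hy₁ hy₂]

lemma cos_third_arccos_add_two_pi_div_three_le (y : ℝ) :
    cos ((1/3) * arccos y + 2*π/3) ≤ -(1/2) := by
  have h₀ := arccos_nonneg y
  have h₁ := arccos_le_pi y
  calc cos ((1/3) * arccos y + 2*π/3) ≤ cos (π - π/3) :=
        cos_le_cos_of_nonneg_of_le_pi (by linarith [pi_pos]) (by linarith) (by linarith)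
    _ = -(1/2) := by rw [cos_pi_sub, cos_pi_div_three]

lemma neg_le_half_mul_div_of_le_neg_half {r C : ℝ} (hr : 0 ≤ r) (hC : C ≤ -(1/2)) :
    -r ≤ (1/2) * r / C := by
  rw [le_div_iff_of_neg (by linarith)]
  nlinarith

lemma one_div_two_mul_sq_sub_of_four_mul_pow_three_sub {r C : ℝ} (hr : r ≠ 0) (hC : C ≠ 0)
    (h : 4 * C ^ 3 - 3 * C = r ^ 3) :
    1 / (2 * ((1/2) * r / C) ^ 2) - (1/2) * r / C = 3 / (2 * r ^ 2) := by
  field_simp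
  linear_combination h

theorem trigonometric_root_mem_Ico_and_eq {r : ℝ} (hr₀ : 0 < r) (hr₁ : r ≤ 1) :
    let x := (1/2) * r / cos ((1/3) * arccos (r ^ 3) + 2*π/3)
    (-r ≤ x ∧ x < 0) ∧ 1 / (2 * x ^ 2) - x = 3 / (2 * r ^ 2) := by
  intro x
  have hC := cos_third_arccos_add_two_pi_div_three_le (r ^ 3)
  have hCneg : cos ((1/3) * arccos (r ^ 3) + 2*π/3) < 0 := by linarith
  have hcubic := four_mul_cos_third_arccos_add_two_pi_div_three_pow_three
    (y := r ^ 3) (by nlinarith [pow_pos hr₀ 3]) (pow_le_one₀ hr₀.le hr₁)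
  exact ⟨⟨neg_le_half_mul_div_of_le_neg_half hr₀.le hC,
      div_neg_of_pos_of_neg (by positivity) hCneg⟩,
    one_div_two_mul_sq_sub_of_four_mul_pow_three_sub hr₀.ne' hCneg.ne hcubic⟩

/-- For every `c > 3/2`, the number
`x = (1/2)√(3/(2c)) · sec((1/3) arccos((3/(2c))^{3/2}) + 2π/3)`
lies in `(−1, 0)` and solves `1/(2x²) − x = c`; i.e. it is the root
`L_D(c)` in `(−1,0)` for the rotating Kepler problem. -/
theorem LD_explicit_formula (c : ℝ) (hc : 3/2 < c) :
    let x : ℝ := (1/2) * Real.sqrt (3/(2*c)) /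
      Real.cos ((1/3) * Real.arccos ((3/(2*c)) ^ ((3:ℝ)/2)) + 2*Real.pi/3)
    (-1 < x ∧ x < 0) ∧ 1/(2*x^2) - x = c := by
  have ht : 0 < 3 / (2 * c) := by positivity
  have ht₁ : 3 / (2 * c) < 1 := by rw [div_lt_one (by linarith)]; linarith
  have hr₀ : 0 < √(3 / (2 * c)) := sqrt_pos.mpr ht
  have hr₁ : √(3 / (2 * c)) < 1 := by simpa using sqrt_lt_sqrt ht.le ht₁
  rw [rpow_three_halves_eq_sqrt_pow_three ht.le]
  obtain ⟨⟨hlower, hneg⟩, heq⟩ := trigonometric_root_mem_Ico_and_eq hr₀ hr₁.le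
  refine ⟨⟨by linarith, hneg⟩, ?_⟩
  rw [heq, sq_sqrt ht.le]
  field_simp
end

section
/- Let c > 3/2, let L_R(c) be the unique positive solution and L_D(c) the unique solution in (−1,0) of 1/(2x²) − x = c. Then for all integers k > l ≥ 1, the double inequality (1/2)(k/l)^{2/3} − (l/k)^{1/3} < c < (1/2)(k/l)^{2/3} + (l/k)^{1/3} holds if and only if L_R(c)³ < l/k < −L_D(c)³. -/
private lemma faux (a b : ℝ) (ha : 0 < a) (hb : 0 < b) :
    1/(2*a^2) - a < 1/(2*b^2) - b ↔ b < a := by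
  have key : (1/(2*b^2) - b) - (1/(2*a^2) - a)
      = (a - b) * ((a+b)/(2*a^2*b^2) + 1) := by
    field_simp
    ring
  have hP : 0 < (a+b)/(2*a^2*b^2) + 1 := by positivity
  rw [← sub_pos, key, mul_pos_iff_of_pos_right hP, sub_pos]

private lemma gaux (a b : ℝ) (ha : 0 < a) (ha1 : a < 1) (hb : 0 < b) (hb1 : b < 1) :
    1/(2*a^2) + a < 1/(2*b^2) + b ↔ b < a := by
  have key : (1/(2*b^2) + b) - (1/(2*a^2) + a)
      = (a - b) * ((a + b - 2*a^2*b^2)/(2*a^2*b^2)) := by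
    field_simp
    ring
  have hab : a*b < 1 := by nlinarith
  have hnum : 0 < a + b - 2*a^2*b^2 := by
    have h2 : 2*a^2*b^2 < 2*(a*b) := by nlinarith [mul_pos ha hb]
    have h3 : 2*(a*b) ≤ a^2 + b^2 := by nlinarith [sq_nonneg (a-b)]
    nlinarith
  have hP : 0 < (a + b - 2*a^2*b^2)/(2*a^2*b^2) := by positivity
  rw [← sub_pos, key, mul_pos_iff_of_pos_right hP, sub_pos]

/-- Let `c > 3/2`, `L_R` the unique positive root and `L_D` the unique root
in `(−1,0)` of `1/(2x²) − x = c`. For all integers `k > l ≥ 1`: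
`(1/2)(k/l)^{2/3} − (l/k)^{1/3} < c < (1/2)(k/l)^{2/3} + (l/k)^{1/3}`
holds iff `L_R(c)³ < l/k < −L_D(c)³`. -/
theorem torus_orbit_existence_range (c : ℝ) (hc : 3/2 < c)
    (LR LD : ℝ) (hLRpos : 0 < LR) (hLR : 1/(2*LR^2) - LR = c)
    (hLDmem : LD ∈ Set.Ioo (-1:ℝ) 0) (hLD : 1/(2*LD^2) - LD = c)
    (k l : ℕ) (hl : 1 ≤ l) (hkl : l < k) :
    ((1/2) * ((k:ℝ)/l) ^ ((2:ℝ)/3) - ((l:ℝ)/k) ^ ((1:ℝ)/3) < c ∧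
      c < (1/2) * ((k:ℝ)/l) ^ ((2:ℝ)/3) + ((l:ℝ)/k) ^ ((1:ℝ)/3)) ↔
    (LR^3 < (l:ℝ)/k ∧ (l:ℝ)/k < -LD^3) := by
  obtain ⟨hLD1, hLD0⟩ := hLDmem
  have hl0 : (0:ℝ) < l := by exact_mod_cast hl
  have hk0 : (0:ℝ) < k := by exact_mod_cast (Nat.zero_le l).trans_lt hkl
  set r : ℝ := (l:ℝ)/k with hrdef
  have hr0 : 0 < r := div_pos hl0 hk0
  have hr1 : r < 1 := (div_lt_one hk0).2 (by exact_mod_cast hkl)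
  set t : ℝ := r ^ ((1:ℝ)/3) with htdef
  have ht0 : 0 < t := Real.rpow_pos_of_pos hr0 _
  have ht1 : t < 1 := Real.rpow_lt_one hr0.le hr1 (by norm_num)
  have ht3 : t^3 = r := by
    rw [htdef, ← Real.rpow_natCast (r ^ ((1:ℝ)/3)) 3, ← Real.rpow_mul hr0.le]
    norm_num
  have ht2 : ((k:ℝ)/l) ^ ((2:ℝ)/3) = (t^2)⁻¹ := by
    have hkl' : (k:ℝ)/l = r⁻¹ := by rw [hrdef, inv_div]
    rw [hkl', ← Real.rpow_natCast (r ^ ((1:ℝ)/3)) 2, ← Real.rpow_mul hr0.le,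
      Real.inv_rpow hr0.le]
    norm_num [Real.rpow_neg hr0.le]
  set d : ℝ := -LD with hddef
  have hd0 : 0 < d := by simp [hddef]; linarith
  have hd1 : d < 1 := by simp [hddef]; linarith
  have hcd : 1/(2*d^2) + d = c := by
    rw [← hLD]; rw [hddef]; ring
  have h1 : (1/2) * ((k:ℝ)/l) ^ ((2:ℝ)/3) - ((l:ℝ)/k) ^ ((1:ℝ)/3) < c ↔ LR < t := by
    rw [← hLR, ht2]
    have : (1/2) * (t^2)⁻¹ - r ^ ((1:ℝ)/3) = 1/(2*t^2) - t := by
      rw [← htdef]; ring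
    rw [← hrdef, this]
    exact faux t LR ht0 hLRpos
  have h2 : c < (1/2) * ((k:ℝ)/l) ^ ((2:ℝ)/3) + ((l:ℝ)/k) ^ ((1:ℝ)/3) ↔ t < d := by
    rw [← hcd, ht2]
    have : (1/2) * (t^2)⁻¹ + r ^ ((1:ℝ)/3) = 1/(2*t^2) + t := by
      rw [← htdef]; ring
    rw [← hrdef, this]
    exact gaux d t hd0 hd1 ht0 ht1
  have h3 : LR^3 < r ↔ LR < t := by
    rw [← ht3]
    exact pow_lt_pow_iff_left₀ hLRpos.le ht0.le (by norm_num)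
  have h4 : r < -LD^3 ↔ t < d := by
    have : -LD^3 = d^3 := by rw [hddef]; ring
    rw [this, ← ht3]
    exact pow_lt_pow_iff_left₀ ht0.le hd0.le (by norm_num)
  rw [h1, h2, h3, h4]
end

section
/- Let c > 3/2 and let x be the unique solution of 1/(2x²) − x = c in (−1,0) (so x = L_D(c)). Then for every integer P ≥ 1: −x³ < 1/(P+1) if and only if c > (P+3)/(2(P+1)^{1/3}). (Equivalently, 0 < −L_D(c)³ < 1/(P+1) ⟺ c > c_R^P, where c_R^P := (P+3)/(2(P+1)^{1/3}) = (1/2)(P+1)^{2/3} + (P+1)^{-1/3}.) -/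
/-- Let `c > 3/2` and `x = L_D(c)` the unique root of `1/(2x²) − x = c` in
`(−1,0)`. For every integer `P ≥ 1`:
`−x³ < 1/(P+1)` iff `c > (P+3)/(2(P+1)^{1/3}) = c_R^P`. -/
theorem LD_cube_iff_cRP (c : ℝ) (hc : 3/2 < c)
    (x : ℝ) (hx : x ∈ Set.Ioo (-1:ℝ) 0) (hxc : 1/(2*x^2) - x = c)
    (P : ℕ) (hP : 1 ≤ P) :
    -x^3 < 1/((P:ℝ)+1) ↔
      ((P:ℝ)+3) / (2 * ((P:ℝ)+1) ^ ((1:ℝ)/3)) < c := by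
  obtain ⟨hx1, hx0⟩ := hx
  set t : ℝ := -x with hxt
  have ht : 0 < t := by simp only [hxt]; linarith
  have ht1 : t < 1 := by simp only [hxt]; linarith
  have hc' : 1/(2*t^2) + t = c := by
    rw [← hxc, hxt]; ring_nf
  set s : ℝ := ((P:ℝ)+1) ^ ((1:ℝ)/3) with hsdef
  have hP1 : (1:ℝ) < (P:ℝ)+1 := by
    have : (1:ℝ) ≤ (P:ℝ) := by exact_mod_cast hP
    linarith
  have hs1 : 1 < s :=
    (Real.one_lt_rpow_iff_of_pos (by linarith)).mpr (Or.inl ⟨hP1, by norm_num⟩)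
  have hs0 : 0 < s := lt_trans one_pos hs1
  have hs3 : s^3 = (P:ℝ)+1 := by
    rw [hsdef, ← Real.rpow_natCast (((P:ℝ)+1) ^ ((1:ℝ)/3)) 3,
      ← Real.rpow_mul (by linarith)]
    norm_num
  have hx3 : -x^3 = t^3 := by rw [hxt]; ring
  rw [hx3, ← hs3, ← hc']
  have h1 : t^2 < s := by nlinarith
  have h2 : t^2 < t*s^2 := by nlinarith [mul_pos ht (show (0:ℝ) < s^2 - t by nlinarith)]
  have hkey : 0 < s + t*s^2 - 2*t^2 := by linarith
  have hts : t^3 < 1/s^3 ↔ t*s < 1 := by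
    rw [lt_div_iff₀ (by positivity), ← mul_pow]
    exact pow_lt_one_iff_of_nonneg (by positivity) (by norm_num)
  rw [hts]
  have hrhs : 1/(2*t^2) + t = (1+2*t^3)/(2*t^2) := by field_simp
  rw [hrhs, div_lt_div_iff₀ (by positivity) (by positivity)]
  constructor
  · intro h
    nlinarith [mul_pos (sub_pos.mpr h) hkey]
  · intro h
    by_contra hcon
    push_neg at hcon
    nlinarith [mul_nonneg (by linarith : (0:ℝ) ≤ t*s - 1) hkey.le]
end

section
/- For every integer P ≥ 1, set c_R^P = (P+3)/(2(P+1)^{1/3}). Then the number x_D = −(P+1)^{-1/3} lies in (−1,0) and satisfies 1/(2x_D²) − x_D = c_R^P, and the number x_R = (−(P+1) + √((P+1)(P+9)))/(4(P+1)^{1/3}) is positive and satisfies 1/(2x_R²) − x_R = c_R^P. (Hence L_D(c_R^P) = −(P+1)^{-1/3} and L_R(c_R^P) = (−(P+1)+√((P+1)(P+9)))/(4(P+1)^{1/3}).) -/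
/-!
Write `t = (P+1)^{1/3}`, so that `c_R^P = (t³+2)/(2t)`. For `x ≠ 0` the equation
`1/(2x²) − x = (t³+2)/(2t)` clears to `(tx+1)(2x² + t²x − t) = 0`. The first factor gives
`x_D = −1/t`, which lies in `(−1,0)` because `t > 1`; the positive root of the quadratic
factor is `(−t³ + √(t⁶+8t³))/(4t)`, and `t⁶ + 8t³ = (P+1)(P+9)` gives `x_R`.
-/

theorem one_div_two_mul_sq_sub_eq_iff {t x : ℝ} (ht : t ≠ 0) (hx : x ≠ 0) :
    1 / (2 * x ^ 2) - x = (t ^ 3 + 2) / (2 * t) ↔ (t * x + 1) * (2 * x ^ 2 + t ^ 2 * x - t) = 0 := by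
  have hfactor : 1 / (2 * x ^ 2) - x - (t ^ 3 + 2) / (2 * t) =
      -((t * x + 1) * (2 * x ^ 2 + t ^ 2 * x - t)) / (2 * t * x ^ 2) := by
    field_simp
    ring
  rw [← sub_eq_zero, hfactor, div_eq_zero_iff, neg_eq_zero]
  simp [ht, hx]

theorem neg_one_div_mem_Ioo {t : ℝ} (ht : 1 < t) : -(1 / t) ∈ Set.Ioo (-1) 0 := by
  have hinv : 1 / t ∈ Set.Ioo 0 1 := ⟨by positivity, (div_lt_one (by linarith)).mpr ht⟩
  exact ⟨neg_lt_neg hinv.2, neg_neg_of_pos hinv.1⟩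

theorem sub_cube_div_pos_of_sq_eq {t s : ℝ} (ht : 0 < t) (hs : 0 ≤ s) (hs2 : s ^ 2 = t ^ 6 + 8 * t ^ 3) :
    0 < (s - t ^ 3) / (4 * t) := by
  have hlt : t ^ 3 < s := lt_of_pow_lt_pow_left₀ 2 hs (by nlinarith [pow_pos ht 3])
  exact div_pos (sub_pos.mpr hlt) (by positivity)

theorem quadratic_eq_zero_of_sq_eq {t s : ℝ} (ht : t ≠ 0) (hs2 : s ^ 2 = t ^ 6 + 8 * t ^ 3) :
    2 * ((s - t ^ 3) / (4 * t)) ^ 2 + t ^ 2 * ((s - t ^ 3) / (4 * t)) - t = 0 := by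
  field_simp
  linear_combination 2 * hs2

theorem rpow_one_div_three_pow_three {u : ℝ} (hu : 0 ≤ u) : (u ^ ((1 : ℝ) / 3)) ^ 3 = u := by
  simpa using Real.rpow_inv_natCast_pow (n := 3) hu (by norm_num)

theorem rpow_neg_one_div_three {u : ℝ} (hu : 0 ≤ u) : u ^ (-(1 : ℝ) / 3) = 1 / u ^ ((1 : ℝ) / 3) := by
  rw [neg_div, Real.rpow_neg hu, inv_eq_one_div]

/-- For every integer `P ≥ 1` and `c_R^P = (P+3)/(2(P+1)^{1/3})`:
`x_D = −(P+1)^{-1/3}` lies in `(−1,0)` and solves `1/(2x²) − x = c_R^P`,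
and `x_R = (−(P+1)+√((P+1)(P+9)))/(4(P+1)^{1/3})` is positive and solves the
same equation. Hence `L_D(c_R^P) = −(P+1)^{-1/3}` and
`L_R(c_R^P) = (−(P+1)+√((P+1)(P+9)))/(4(P+1)^{1/3})`. -/
theorem roots_at_cRP (P : ℕ) (hP : 1 ≤ P) :
    let cRP : ℝ := ((P:ℝ)+3) / (2 * ((P:ℝ)+1) ^ ((1:ℝ)/3))
    let xD : ℝ := -(((P:ℝ)+1) ^ (-(1:ℝ)/3))
    let xR : ℝ := (-((P:ℝ)+1) + Real.sqrt (((P:ℝ)+1) * ((P:ℝ)+9))) /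
      (4 * ((P:ℝ)+1) ^ ((1:ℝ)/3))
    ((-1 < xD ∧ xD < 0) ∧ 1/(2*xD^2) - xD = cRP) ∧
    (0 < xR ∧ 1/(2*xR^2) - xR = cRP) := by
  intro cRP xD xR
  have hu : (1 : ℝ) < P + 1 := by
    have : (1 : ℝ) ≤ P := by exact_mod_cast hP
    linarith
  set t := ((P : ℝ) + 1) ^ ((1 : ℝ) / 3)
  set s := Real.sqrt (((P : ℝ) + 1) * ((P : ℝ) + 9))
  have ht1 : 1 < t := Real.one_lt_rpow hu (by norm_num)
  have ht0 : 0 < t := by linarith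
  have ht3 : t ^ 3 = P + 1 := rpow_one_div_three_pow_three (by linarith)
  have hs2 : s ^ 2 = t ^ 6 + 8 * t ^ 3 := by
    rw [Real.sq_sqrt (by positivity), show t ^ 6 = (t ^ 3) ^ 2 by ring, ht3]
    ring
  have hcRP : cRP = (t ^ 3 + 2) / (2 * t) := by
    simp only [cRP, ht3]
    ring
  have hxD : xD = -(1 / t) := congrArg Neg.neg (rpow_neg_one_div_three (by linarith))
  have hxR : xR = (s - t ^ 3) / (4 * t) := by
    simp only [xR, ht3]
    ring
  have hxR_pos := sub_cube_div_pos_of_sq_eq ht0 (Real.sqrt_nonneg _) hs2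
  rw [hxD, hxR, hcRP, one_div_two_mul_sq_sub_eq_iff ht0.ne' (neg_ne_zero.mpr (by positivity)),
    one_div_two_mul_sq_sub_eq_iff ht0.ne' hxR_pos.ne']
  refine ⟨⟨neg_one_div_mem_Ioo ht1, mul_eq_zero_of_left ?_ _⟩,
    hxR_pos, mul_eq_zero_of_right _ (quadratic_eq_zero_of_sq_eq ht0.ne' hs2)⟩
  field_simp
  ring
end

section
/- For every integer P ≥ 2, the number x̄ = (√(P+9) − √(P+1))/(2(P+1)^{1/6}) satisfies 0 < x̄ ≤ 3^{-1/3}, (3/2)x̄² + 1/x̄ = c_H^P, and x̄² = c_H^P − c_R^P, where c_H^P = (2P+8−√((P+1)(P+9)))/(2(P+1)^{1/3}) and c_R^P = (P+3)/(2(P+1)^{1/3}). In particular c_H^P > c_R^P. -/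
/-!
With `u = (P+1)^{1/6}` and `t = √(P+9)` one has `t² = u⁶ + 8`, `x̄ = (t - u³)/(2u)`,
`c_H = (2u⁶ + 6 - u³t)/(2u²)` and `c_R = (u⁶ + 2)/(2u²)`, and the identities are
consequences of `t² = u⁶ + 8` alone. The same relation says that `x̄` is the positive root of
`s x² + s² x = 2` with `s = u² = (P+1)^{1/3}`. For `P ≥ 2` we have `s ≥ 3^{1/3}`, so
`y = 3^{-1/3}` satisfies `s y ≥ 1`, hence `s y² + s² y ≥ y + s ≥ 2`, and `x̄ ≤ y`.
-/

open Real

noncomputable section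

namespace Hill

def cH (p : ℝ) : ℝ := (2*p+8 - √((p+1) * (p+9))) / (2 * (p+1) ^ ((1:ℝ)/3))

def cR (p : ℝ) : ℝ := (p+3) / (2 * (p+1) ^ ((1:ℝ)/3))

def xbar (p : ℝ) : ℝ := (√(p+9) - √(p+1)) / (2 * (p+1) ^ ((1:ℝ)/6))

theorem le_of_mul_sq_add_sq_mul_eq_two {s x y : ℝ} (hy : 0 < y) (hsy : 1 ≤ s * y)
    (h : s * x ^ 2 + s ^ 2 * x = 2) : x ≤ y := by
  have hs : 0 < s := pos_of_mul_pos_left (one_pos.trans_le hsy) hy.le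
  have hys : 2 ≤ y + s := by nlinarith [sq_nonneg (y - s)]
  by_contra! hxy
  nlinarith [mul_pos hs (sub_pos.mpr hxy)]

section Algebra

variable {u t : ℝ}

theorem pow_three_lt_of_sq_eq (ht0 : 0 ≤ t) (ht : t ^ 2 = u ^ 6 + 8) : u ^ 3 < t :=
  abs_lt_of_sq_lt_sq' (by nlinarith) ht0 |>.2

theorem sq_sub_pow_three_div_eq (hu : u ≠ 0) (ht : t ^ 2 = u ^ 6 + 8) :
    ((t - u ^ 3) / (2 * u)) ^ 2 =
      (2 * u ^ 6 + 6 - u ^ 3 * t) / (2 * u ^ 2) - (u ^ 6 + 2) / (2 * u ^ 2) := by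
  field_simp
  linear_combination ht

theorem mul_sq_add_sq_mul_eq_two (hu : u ≠ 0) (ht : t ^ 2 = u ^ 6 + 8) :
    u ^ 2 * ((t - u ^ 3) / (2 * u)) ^ 2 + (u ^ 2) ^ 2 * ((t - u ^ 3) / (2 * u)) = 2 := by
  field_simp
  linear_combination ht

theorem energy_sub_pow_three_div_eq (hu : u ≠ 0) (htu : u ^ 3 < t) (ht : t ^ 2 = u ^ 6 + 8) :
    3 / 2 * ((t - u ^ 3) / (2 * u)) ^ 2 + 1 / ((t - u ^ 3) / (2 * u)) =
      (2 * u ^ 6 + 6 - u ^ 3 * t) / (2 * u ^ 2) := by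
  have : t - u ^ 3 ≠ 0 := (sub_pos.mpr htu).ne'
  field_simp
  linear_combination (3 * t - 5 * u ^ 3) * ht

end Algebra

theorem exists_sixth_root_form {p : ℝ} (hp : -1 < p) :
    ∃ u t : ℝ, 0 < u ∧ u ^ 6 = p + 1 ∧ 0 ≤ t ∧ t ^ 2 = u ^ 6 + 8 ∧
      xbar p = (t - u ^ 3) / (2 * u) ∧
      cH p = (2 * u ^ 6 + 6 - u ^ 3 * t) / (2 * u ^ 2) ∧
      cR p = (u ^ 6 + 2) / (2 * u ^ 2) := by
  have ha : 0 ≤ p + 1 := by linarith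
  set u := (p + 1) ^ ((1:ℝ)/6)
  have hpow (x : ℝ) (n : ℕ) (h : x = 1 / 6 * n) : (p + 1) ^ x = u ^ n := by
    rw [h, rpow_mul_natCast ha]
  have h6 : u ^ 6 = p + 1 := by rw [← hpow 1 6 (by norm_num), rpow_one]
  refine ⟨u, √(p + 9), rpow_pos_of_pos (by linarith) _, h6, sqrt_nonneg _, ?_, ?_, ?_, ?_⟩
  · rw [sq_sqrt (by linarith), h6]; ring
  · rw [xbar, sqrt_eq_rpow (p + 1), hpow (1 / 2) 3 (by norm_num)]
  · rw [cH, sqrt_mul ha, sqrt_eq_rpow (p + 1), hpow (1 / 2) 3 (by norm_num),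
      hpow (1 / 3) 2 (by norm_num), h6]
    ring
  · rw [cR, hpow (1 / 3) 2 (by norm_num), h6]
    ring

variable {p : ℝ}

theorem xbar_pos (hp : -1 < p) : 0 < xbar p := by
  obtain ⟨u, t, hu, -, ht0, ht, hx, -⟩ := exists_sixth_root_form hp
  rw [hx]
  exact div_pos (sub_pos.mpr (pow_three_lt_of_sq_eq ht0 ht)) (by positivity)

theorem xbar_sq (hp : -1 < p) : xbar p ^ 2 = cH p - cR p := by
  obtain ⟨u, t, hu, -, -, ht, hx, hH, hR⟩ := exists_sixth_root_form hp
  rw [hx, hH, hR]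
  exact sq_sub_pow_three_div_eq hu.ne' ht

theorem energy_xbar (hp : -1 < p) : 3 / 2 * xbar p ^ 2 + 1 / xbar p = cH p := by
  obtain ⟨u, t, hu, -, ht0, ht, hx, hH, -⟩ := exists_sixth_root_form hp
  rw [hx, hH]
  exact energy_sub_pow_three_div_eq hu.ne' (pow_three_lt_of_sq_eq ht0 ht) ht

theorem cR_lt_cH (hp : -1 < p) : cR p < cH p :=
  sub_pos.mp (xbar_sq hp ▸ pow_pos (xbar_pos hp) 2)

theorem xbar_le (hp : 2 ≤ p) : xbar p ≤ 3 ^ (-(1:ℝ)/3) := by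
  obtain ⟨u, t, hu, h6, -, ht, hx, -⟩ := exists_sixth_root_form (by linarith : -1 < p)
  set y : ℝ := 3 ^ (-(1:ℝ)/3)
  have hy : 0 < y := by positivity
  have hy3 : y ^ 3 = 1 / 3 := by
    rw [← rpow_mul_natCast (by norm_num)]
    norm_num
  have hsy : 1 ≤ u ^ 2 * y := by
    refine (one_le_pow_iff_of_nonneg (by positivity) three_ne_zero).mp ?_
    rw [mul_pow, ← pow_mul, hy3, h6]
    linarith
  rw [hx]
  exact le_of_mul_sq_add_sq_mul_eq_two hy hsy (mul_sq_add_sq_mul_eq_two hu.ne' ht)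

end Hill

end

/-- The Claim in the proof of Theorem 5.5: for every integer `P ≥ 2`, the
number `x̄ = (√(P+9) − √(P+1))/(2(P+1)^{1/6})` satisfies `0 < x̄ ≤ 3^{-1/3}`,
`(3/2)x̄² + 1/x̄ = c_H^P`, and `x̄² = c_H^P − c_R^P`, where
`c_H^P = (2P+8−√((P+1)(P+9)))/(2(P+1)^{1/3})` and
`c_R^P = (P+3)/(2(P+1)^{1/3})`. In particular `c_R^P < c_H^P`. -/
theorem hill_region_width_claim (P : ℕ) (hP : 2 ≤ P) :
    let cHP : ℝ := (2*(P:ℝ)+8 - Real.sqrt (((P:ℝ)+1) * ((P:ℝ)+9))) /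
      (2 * ((P:ℝ)+1) ^ ((1:ℝ)/3))
    let cRP : ℝ := ((P:ℝ)+3) / (2 * ((P:ℝ)+1) ^ ((1:ℝ)/3))
    let xbar : ℝ := (Real.sqrt ((P:ℝ)+9) - Real.sqrt ((P:ℝ)+1)) /
      (2 * ((P:ℝ)+1) ^ ((1:ℝ)/6))
    (0 < xbar ∧ xbar ≤ (3:ℝ) ^ (-(1:ℝ)/3)) ∧
    (3/2) * xbar^2 + 1/xbar = cHP ∧
    xbar^2 = cHP - cRP ∧
    cRP < cHP := by
  have hp : (2 : ℝ) ≤ P := by exact_mod_cast hP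
  have hp' : (-1 : ℝ) < P := by linarith
  exact ⟨⟨Hill.xbar_pos hp', Hill.xbar_le hp⟩, Hill.energy_xbar hp', Hill.xbar_sq hp',
    Hill.cR_lt_cH hp'⟩
end
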